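/- arXiv:2408.02154 — 2 statements merged into one kernel-verified Lean document; each statement's English description precedes it below -/
import Mathlib

section
/- Suppose W_δ(x, u) ≥ W_hom(u) - (L_δ(x) + L)|u - ⟨u⟩| pointwise on Q, where W_hom is L-Lipschitz and the Poincaré inequality with constant c_P δ^2 holds on Q. Then for every α > 0, ∫_Q (ε/2)|∇u|^2 + W_δ(x,u)/ε dx ≥ ∫_Q ((1 - c_P α)ε/2)|∇u|^2 + W_hom(u)/ε dx - C (δ/ε)^2 (1/(αε)) |Q| - |∫_Q (W_δ(x,⟨u⟩) - W_hom(⟨u⟩))/ε dx|, where C depends on the L^2-average of (L_δ + L)^2 over Q. -/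
open MeasureTheory Set

/-!
Moving the argument of `W_δ(x, ·)` and of `W_hom` from `u` to `⟨u⟩` costs at most
`(L_δ + L) |u - ⟨u⟩|`. Young's inequality with weight `t = α ε² / δ²` splits this into
`(L_δ + L)² / (2t)`, which integrates to the `C` term, and `t/2 |u - ⟨u⟩|²`, which the Poincaré
inequality turns into the fraction `c_P α` of the gradient energy.
-/

theorem mul_le_sq_div_add_mul_sq {a b t : ℝ} (ht : 0 < t) :
    a * b ≤ a ^ 2 / (2 * t) + t / 2 * b ^ 2 := by
  have h : a ^ 2 / (2 * t) + t / 2 * b ^ 2 - a * b = (a - t * b) ^ 2 / (2 * t) := by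
    field_simp
    ring
  rw [← sub_nonneg, h]
  positivity

section

variable {X : Type*} [MeasurableSpace X] {μ : Measure X} {s : Set X}

theorem setIntegral_div_toReal_mem_Icc {f : X → ℝ} {M : ℝ} (hs₀ : μ s ≠ 0) (hs : μ s < ⊤)
    (hf : ∀ x ∈ s, f x ∈ Icc (-M) M) : (∫ x in s, f x ∂μ) / (μ s).toReal ∈ Icc (-M) M := by
  have hpos : 0 < (μ s).toReal := ENNReal.toReal_pos hs₀ hs.ne
  have hbound : ‖∫ x in s, f x ∂μ‖ ≤ M * μ.real s :=
    norm_setIntegral_le_of_norm_le_const hs fun x hx => abs_le.mpr (hf x hx)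
  rw [mem_Icc, ← abs_le, abs_div, abs_of_pos hpos, div_le_iff₀ hpos]
  exact hbound

theorem setIntegral_lower_bound_of_lipschitz {u K : X → ℝ} {W : X → ℝ → ℝ} {Wh : ℝ → ℝ}
    {m L t : ℝ} (hs : MeasurableSet s) (hμs : μ s ≠ ⊤) (ht : 0 < t)
    (hW : ∀ x ∈ s, |W x (u x) - W x m| ≤ K x * |u x - m|)
    (hWh : ∀ x ∈ s, |Wh (u x) - Wh m| ≤ L * |u x - m|)
    (hWu : IntegrableOn (fun x => W x (u x)) s μ) (hWhu : IntegrableOn (fun x => Wh (u x)) s μ)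
    (hWm : IntegrableOn (fun x => W x m) s μ) (hK : IntegrableOn (fun x => (K x + L) ^ 2) s μ)
    (hu : IntegrableOn (fun x => (u x - m) ^ 2) s μ) :
    ∫ x in s, Wh (u x) ∂μ + ∫ x in s, (W x m - Wh m) ∂μ
        - (∫ x in s, (K x + L) ^ 2 ∂μ) / (2 * t) - t / 2 * ∫ x in s, (u x - m) ^ 2 ∂μ
      ≤ ∫ x in s, W x (u x) ∂μ := by
  have hpointwise : ∀ x ∈ s, Wh (u x) + (W x m - Wh m)
      - ((K x + L) ^ 2 / (2 * t) + t / 2 * (u x - m) ^ 2) ≤ W x (u x) := by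
    intro x hx
    have hyoung := mul_le_sq_div_add_mul_sq (a := K x + L) (b := |u x - m|) ht
    rw [sq_abs] at hyoung
    linarith [(abs_sub_le_iff.mp (hW x hx)).2, (abs_sub_le_iff.mp (hWh x hx)).1]
  have hWm' : IntegrableOn (fun x => W x m - Wh m) s μ := hWm.sub (integrableOn_const hμs)
  have hlhs : IntegrableOn (fun x => Wh (u x) + (W x m - Wh m)) s μ := hWhu.add hWm'
  have hrhs : IntegrableOn (fun x => (K x + L) ^ 2 / (2 * t) + t / 2 * (u x - m) ^ 2) s μ :=
    (hK.div_const _).add (hu.const_mul _)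
  have hmono : ∫ x in s, (Wh (u x) + (W x m - Wh m)
      - ((K x + L) ^ 2 / (2 * t) + t / 2 * (u x - m) ^ 2)) ∂μ ≤ ∫ x in s, W x (u x) ∂μ :=
    setIntegral_mono_on (hlhs.sub hrhs) hWu hs hpointwise
  rw [integral_sub hlhs hrhs, integral_add hWhu hWm', integral_add
    (hK.div_const _) (hu.const_mul _), integral_div, integral_const_mul] at hmono
  linarith

end

theorem energy_lower_bound_of_poincare {A B C V I₁ I₂ I₃ cP δ ε α : ℝ} (hε : 0 < ε)
    (hδ : 0 < δ) (hα : 0 < α) (hCV : 0 ≤ C * V)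
    (hpot : I₂ + I₃ - C * V / (2 * (α * ε ^ 2 / δ ^ 2)) - α * ε ^ 2 / δ ^ 2 / 2 * B ≤ I₁)
    (hP : B ≤ cP * δ ^ 2 * A) :
    (1 - cP * α) * ε / 2 * A + I₂ / ε - C * (δ / ε) ^ 2 * (1 / (α * ε)) * V - |I₃ / ε|
      ≤ ε / 2 * A + I₁ / ε := by
  have hB : α * ε ^ 2 / δ ^ 2 / 2 * B ≤ cP * α * ε ^ 2 / 2 * A := by
    calc α * ε ^ 2 / δ ^ 2 / 2 * B ≤ α * ε ^ 2 / δ ^ 2 / 2 * (cP * δ ^ 2 * A) := by gcongr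
      _ = cP * α * ε ^ 2 / 2 * A := by field_simp
  have hCterm :
      C * V / (2 * (α * ε ^ 2 / δ ^ 2)) ≤ ε * (C * (δ / ε) ^ 2 * (1 / (α * ε)) * V) := by
    have h : ε * (C * (δ / ε) ^ 2 * (1 / (α * ε)) * V) = C * V / (α * ε ^ 2 / δ ^ 2) := by
      field_simp
    rw [h]
    gcongr
    linarith [show 0 < α * ε ^ 2 / δ ^ 2 by positivity]
  rw [abs_div, abs_of_pos hε, ← sub_nonneg]
  have h : ε / 2 * A + I₁ / ε - ((1 - cP * α) * ε / 2 * A + I₂ / ε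
      - C * (δ / ε) ^ 2 * (1 / (α * ε)) * V - |I₃| / ε)
      = (I₁ - I₂ + |I₃| + cP * α * ε ^ 2 / 2 * A + ε * (C * (δ / ε) ^ 2 * (1 / (α * ε)) * V))
        / ε := by
    field_simp
    ring
  rw [h]
  have hI₃ := neg_abs_le I₃
  exact div_nonneg (by linarith) hε.le

theorem stmt4_general (d : ℕ) (Q : Set (EuclideanSpace ℝ (Fin d))) (hQmeas : MeasurableSet Q)
    (hQbdd : Bornology.IsBounded Q)
    (u g Lδ : EuclideanSpace ℝ (Fin d) → ℝ) (Wδ : EuclideanSpace ℝ (Fin d) → ℝ → ℝ)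
    (Whom : ℝ → ℝ) (m cP δ ε α L M C : ℝ)
    (hε : 0 < ε) (hδ : 0 < δ) (hα : 0 < α) (hL : 0 ≤ L)
    (hm : m = (∫ x in Q, u x) / (volume Q).toReal)
    (hrange : ∀ x ∈ Q, u x ∈ Set.Icc (-M) M)
    (hWδLip : ∀ x ∈ Q, ∀ u₁ ∈ Set.Icc (-M) M, ∀ u₂ ∈ Set.Icc (-M) M,
      |Wδ x u₁ - Wδ x u₂| ≤ Lδ x * |u₁ - u₂|)
    (hWhomLip : LipschitzWith (Real.toNNReal L) Whom)
    (hPoincare : ∫ x in Q, (u x - m) ^ 2 ≤ cP * δ ^ 2 * ∫ x in Q, g x ^ 2)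
    (hC : C = (∫ x in Q, (Lδ x + L) ^ 2) / (volume Q).toReal)
    (hint1 : IntegrableOn (fun x => g x ^ 2) Q)
    (hint2 : IntegrableOn (fun x => Wδ x (u x)) Q)
    (hint3 : IntegrableOn (fun x => Whom (u x)) Q)
    (hint4 : IntegrableOn (fun x => Wδ x m) Q)
    (hint5 : IntegrableOn (fun x => (Lδ x + L) ^ 2) Q)
    (hint6 : IntegrableOn (fun x => (u x - m) ^ 2) Q) :
    ∫ x in Q, (ε / 2 * g x ^ 2 + Wδ x (u x) / ε)
      ≥ (∫ x in Q, ((1 - cP * α) * ε / 2 * g x ^ 2 + Whom (u x) / ε))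
        - C * (δ / ε) ^ 2 * (1 / (α * ε)) * (volume Q).toReal
        - |∫ x in Q, (Wδ x m - Whom m) / ε| := by
  have hfin : volume Q < ⊤ := hQbdd.measure_lt_top
  rcases eq_or_ne (volume Q) 0 with hzero | hpos
  · simp [Measure.restrict_eq_zero.mpr hzero, hzero]
  have hmean : m ∈ Icc (-M) M := hm ▸ setIntegral_div_toReal_mem_Icc hpos hfin hrange
  have hWhom : ∀ a b, |Whom a - Whom b| ≤ L * |a - b| := fun a b => by
    simpa [Real.dist_eq, Real.coe_toNNReal L hL] using hWhomLip.dist_le_mul a b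
  have hD : ∫ x in Q, (Lδ x + L) ^ 2 = C * (volume Q).toReal := by
    rw [hC, div_mul_cancel₀ _ (ENNReal.toReal_pos hpos hfin.ne).ne']
  have hpot := setIntegral_lower_bound_of_lipschitz hQmeas hfin.ne
    (t := α * ε ^ 2 / δ ^ 2) (by positivity) (fun x hx => hWδLip x hx _ (hrange x hx) _ hmean)
    (fun x _ => hWhom _ _) hint2 hint3 hint4 hint5 hint6
  rw [hD] at hpot
  have hCV : 0 ≤ C * (volume Q).toReal :=
    hD ▸ setIntegral_nonneg hQmeas fun x _ => sq_nonneg _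
  rw [ge_iff_le, integral_add (hint1.const_mul _) (hint2.div_const _),
    integral_add (hint1.const_mul _) (hint3.div_const _), integral_const_mul, integral_const_mul,
    integral_div, integral_div, integral_div]
  exact energy_lower_bound_of_poincare hε hδ hα hCV hpot hPoincare

/-- Lemma `eps32` (cell-wise lower bound): `Q` open bounded with Poincaré constant
`c_P δ²`, `u ∈ H¹(Q; [-M,M])` with `g = |∇u|`, `m = ⟨u⟩` its mean over `Q`,
`W_δ` Lipschitz in `u` with constant `L_δ(x)`, `W_hom` `L`-Lipschitz, and
`C = (1/|Q|) ∫_Q (L_δ + L)²`. -/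
theorem stmt4 (d : ℕ) (Q : Set (EuclideanSpace ℝ (Fin d))) (hQmeas : MeasurableSet Q)
    (hQopen : IsOpen Q) (hQbdd : Bornology.IsBounded Q)
    (u g Lδ : EuclideanSpace ℝ (Fin d) → ℝ) (Wδ : EuclideanSpace ℝ (Fin d) → ℝ → ℝ)
    (Whom : ℝ → ℝ) (m cP δ ε α L M C : ℝ)
    (hε : 0 < ε) (hδ : 0 < δ) (hα : 0 < α) (hL : 0 ≤ L) (hcP : 0 ≤ cP) (hM : 0 < M)
    (hLδ : ∀ x, 0 ≤ Lδ x) (hg : ∀ x, 0 ≤ g x)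
    (hm : m = (∫ x in Q, u x) / (volume Q).toReal)
    (hrange : ∀ x ∈ Q, u x ∈ Set.Icc (-M) M)
    (hWδLip : ∀ x ∈ Q, ∀ u₁ ∈ Set.Icc (-M) M, ∀ u₂ ∈ Set.Icc (-M) M,
      |Wδ x u₁ - Wδ x u₂| ≤ Lδ x * |u₁ - u₂|)
    (hWhomLip : LipschitzWith (Real.toNNReal L) Whom)
    (hPoincare : ∫ x in Q, (u x - m) ^ 2 ≤ cP * δ ^ 2 * ∫ x in Q, g x ^ 2)
    (hC : C = (∫ x in Q, (Lδ x + L) ^ 2) / (volume Q).toReal)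
    (hint1 : IntegrableOn (fun x => g x ^ 2) Q)
    (hint2 : IntegrableOn (fun x => Wδ x (u x)) Q)
    (hint3 : IntegrableOn (fun x => Whom (u x)) Q)
    (hint4 : IntegrableOn (fun x => Wδ x m) Q)
    (hint5 : IntegrableOn (fun x => (Lδ x + L) ^ 2) Q)
    (hint6 : IntegrableOn (fun x => (u x - m) ^ 2) Q) :
    ∫ x in Q, (ε / 2 * g x ^ 2 + Wδ x (u x) / ε)
      ≥ (∫ x in Q, ((1 - cP * α) * ε / 2 * g x ^ 2 + Whom (u x) / ε))
        - C * (δ / ε) ^ 2 * (1 / (α * ε)) * (volume Q).toReal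
        - |∫ x in Q, (Wδ x m - Whom m) / ε| :=
  stmt4_general d Q hQmeas hQbdd u g Lδ Wδ Whom m cP δ ε α L M C hε hδ hα hL hm hrange hWδLip
    hWhomLip hPoincare hC hint1 hint2 hint3 hint4 hint5 hint6
end

section
/- Let W_hom : ℝ → [0,∞) be Lipschitz on [-1,1] with W_hom(±1) = 0 and W_hom > 0 on (-1,1). Any solution φ : ℝ → [-1,1] of the ODE φ' = √(2 W_hom(φ)) with φ(0) = 0 is monotone increasing, Lipschitz-continuous with Lipschitz constant at most max_{u∈[-1,1]} √(2 W_hom(u)), and satisfies lim_{x→±∞} φ(x) = ±1. -/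
/-!
A solution of `φ' = √(2 W(φ))` with values in `[-1, 1]` has `0 ≤ φ' ≤ sup_{[-1,1]} √(2 W)`,
which gives monotonicity and the Lipschitz bound. Being monotone and bounded, `φ` converges at
`+∞` to some `L ∈ (φ 0, 1]`, and then `φ' = √(2 W(φ))` converges to `√(2 W(L))`. A convergent
function whose derivative has a limit must have derivative limit `0` (otherwise it grows
linearly), so `W(L) = 0` and `L = 1` since `W > 0` on `(-1, 1)`. The limit at `-∞` follows
by applying this to `x ↦ -φ(-x)`.
-/

open Real Filter Set Topology

theorem tendsto_atTop_of_hasDerivAt_of_tendsto_pos {f f' : ℝ → ℝ} {c : ℝ}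
    (hf : ∀ x, HasDerivAt f (f' x) x) (hf' : Tendsto f' atTop (𝓝 c)) (hc : 0 < c) :
    Tendsto f atTop atTop := by
  obtain ⟨a, ha⟩ := eventually_atTop.1 (hf'.eventually (lt_mem_nhds (half_lt_self hc)))
  have hdiff : Differentiable ℝ f := fun x => (hf x).differentiableAt
  have hgrowth : ∀ x ∈ Ici a, c / 2 * (x - a) ≤ f x - f a := fun x hx =>
    (convex_Ici a).mul_sub_le_image_sub_of_le_deriv hdiff.continuous.continuousOn
      hdiff.differentiableOn (fun y hy => by
        rw [interior_Ici] at hy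
        rw [(hf y).deriv]
        exact (ha y hy.le).le) a self_mem_Ici x hx hx
  refine tendsto_atTop_mono' atTop (eventually_atTop.2 ⟨a, fun x hx => ?_⟩)
    (tendsto_atTop_add_const_right atTop (f a - c / 2 * a)
      (tendsto_id.const_mul_atTop (half_pos hc)))
  rw [id]
  linarith [hgrowth x hx]

theorem eq_zero_of_tendsto_of_hasDerivAt_of_tendsto {f f' : ℝ → ℝ} {L c : ℝ}
    (hf : ∀ x, HasDerivAt f (f' x) x) (hfL : Tendsto f atTop (𝓝 L))
    (hf' : Tendsto f' atTop (𝓝 c)) : c = 0 := by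
  refine le_antisymm (not_lt.1 fun hc => ?_) (neg_nonpos.1 <| not_lt.1 fun hc => ?_)
  · exact not_tendsto_nhds_of_tendsto_atTop
      (tendsto_atTop_of_hasDerivAt_of_tendsto_pos hf hf' hc) L hfL
  · exact not_tendsto_nhds_of_tendsto_atTop
      (tendsto_atTop_of_hasDerivAt_of_tendsto_pos (fun x => (hf x).neg) hf'.neg hc) (-L) hfL.neg

theorem ContinuousOn.le_biSup_of_isCompact {α β : Type*} [TopologicalSpace β]
    [ConditionallyCompleteLinearOrder α] [TopologicalSpace α] [ClosedIciTopology α] [Nonempty α]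
    {g : β → α} {s : Set β} (hg : ContinuousOn g s) (hs : IsCompact s) {x : β} (hx : x ∈ s) :
    g x ≤ ⨆ u ∈ s, g u :=
  le_ciSup₂ (f := fun u (_ : u ∈ s) => g u) ((hs.bddAbove_image hg).mono <| iUnion_subset fun _ =>
    range_subset_iff.2 fun hu => mem_image_of_mem g hu) x hx

section AutonomousODE

variable {f φ : ℝ → ℝ} {a b x₀ : ℝ}

theorem tendsto_atTop_nhds_right_of_hasDerivAt_comp (hf : ContinuousOn f (Icc a b))
    (hf_nonneg : ∀ u ∈ Icc a b, 0 ≤ f u) (hf_pos : ∀ u ∈ Ioo a b, 0 < f u)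
    (hφ_mem : ∀ x, φ x ∈ Icc a b) (hφ : ∀ x, HasDerivAt φ (f (φ x)) x) (hx₀ : a < φ x₀) :
    Tendsto φ atTop (𝓝 b) := by
  have hmono : Monotone φ := monotone_of_hasDerivAt_nonneg hφ fun x => hf_nonneg _ (hφ_mem x)
  have hbdd : BddAbove (range φ) := ⟨b, forall_mem_range.2 fun x => (hφ_mem x).2⟩
  set L := ⨆ x, φ x
  have hlim : Tendsto φ atTop (𝓝 L) := tendsto_atTop_ciSup hmono hbdd
  have hL : L ∈ Ioc a b := ⟨hx₀.trans_le (le_ciSup hbdd x₀), ciSup_le fun x => (hφ_mem x).2⟩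
  have hderiv : Tendsto (fun x => f (φ x)) atTop (𝓝 (f L)) :=
    (hf L (Ioc_subset_Icc_self hL)).tendsto.comp
      (tendsto_nhdsWithin_iff.2 ⟨hlim, Eventually.of_forall hφ_mem⟩)
  have hfL : f L = 0 := eq_zero_of_tendsto_of_hasDerivAt_of_tendsto hφ hlim hderiv
  rcases hL.2.eq_or_lt with hLb | hLb
  · rwa [hLb] at hlim
  · exact absurd hfL (hf_pos L ⟨hL.1, hLb⟩).ne'

theorem tendsto_atBot_nhds_left_of_hasDerivAt_comp (hf : ContinuousOn f (Icc a b))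
    (hf_nonneg : ∀ u ∈ Icc a b, 0 ≤ f u) (hf_pos : ∀ u ∈ Ioo a b, 0 < f u)
    (hφ_mem : ∀ x, φ x ∈ Icc a b) (hφ : ∀ x, HasDerivAt φ (f (φ x)) x) (hx₀ : φ x₀ < b) :
    Tendsto φ atBot (𝓝 a) := by
  have hrefl : Tendsto (fun x => -φ (-x)) atTop (𝓝 (-a)) := by
    refine tendsto_atTop_nhds_right_of_hasDerivAt_comp (f := fun u => f (-u)) (x₀ := -x₀)
      (hf.comp continuousOn_neg fun u hu => neg_mem_Icc_iff.2 hu)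
      (fun u hu => hf_nonneg _ (neg_mem_Icc_iff.2 hu))
      (fun u hu => hf_pos _ (neg_mem_Ioo_iff.2 hu))
      (fun x => neg_mem_Icc_iff.2 (by simpa using hφ_mem (-x)))
      (fun x => ((hφ (-x)).comp x (hasDerivAt_neg x)).neg.congr_deriv (by simp))
      (by simpa using hx₀)
  simpa using (hrefl.comp tendsto_neg_atBot_atTop).neg

end AutonomousODE

theorem stmt7_general (Whom : ℝ → ℝ) (φ : ℝ → ℝ)
    (hWlip : ∃ K : NNReal, LipschitzOnWith K Whom (Set.Icc (-1) 1))
    (hWpos : ∀ v ∈ Set.Ioo (-1 : ℝ) 1, 0 < Whom v)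
    (hφrange : ∀ x, φ x ∈ Set.Icc (-1 : ℝ) 1)
    (hφ : ∀ x, HasDerivAt φ (Real.sqrt (2 * Whom (φ x))) x)
    (hφ0 : φ 0 = 0) :
    Monotone φ ∧
    LipschitzWith (Real.toNNReal (⨆ u ∈ Set.Icc (-1 : ℝ) 1, Real.sqrt (2 * Whom u))) φ ∧
    Tendsto φ atTop (nhds 1) ∧ Tendsto φ atBot (nhds (-1)) := by
  obtain ⟨K, hK⟩ := hWlip
  have hf : ContinuousOn (fun u => √(2 * Whom u)) (Icc (-1) 1) :=
    (continuousOn_const.mul hK.continuousOn).sqrt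
  have hf_nonneg : ∀ u ∈ Icc (-1 : ℝ) 1, 0 ≤ √(2 * Whom u) := fun _ _ => sqrt_nonneg _
  have hf_pos : ∀ u ∈ Ioo (-1 : ℝ) 1, 0 < √(2 * Whom u) := fun u hu =>
    sqrt_pos.2 (mul_pos two_pos (hWpos u hu))
  have hlip : LipschitzWith (⨆ u ∈ Icc (-1 : ℝ) 1, √(2 * Whom u)).toNNReal φ := by
    refine lipschitzWith_of_nnnorm_deriv_le (fun x => (hφ x).differentiableAt) fun x => ?_
    rw [(hφ x).deriv, nnnorm_of_nonneg (sqrt_nonneg _), ← toNNReal_of_nonneg (sqrt_nonneg _)]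
    exact toNNReal_le_toNNReal (hf.le_biSup_of_isCompact isCompact_Icc (hφrange x))
  exact ⟨monotone_of_hasDerivAt_nonneg hφ fun x => sqrt_nonneg _, hlip,
    tendsto_atTop_nhds_right_of_hasDerivAt_comp hf hf_nonneg hf_pos hφrange hφ
      (x₀ := 0) (by simp [hφ0]),
    tendsto_atBot_nhds_left_of_hasDerivAt_comp hf hf_nonneg hf_pos hφrange hφ
      (x₀ := 0) (by simp [hφ0])⟩

/-- Properties of the optimal profile: a solution of `φ' = √(2 W_hom(φ))`, `φ(0)=0`,
with values in `[-1,1]` is monotone increasing, Lipschitz with constant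
`max_{u ∈ [-1,1]} √(2 W_hom(u))`, and tends to `±1` at `±∞`. -/
theorem stmt7 (Whom : ℝ → ℝ) (φ : ℝ → ℝ)
    (hWlip : ∃ K : NNReal, LipschitzOnWith K Whom (Set.Icc (-1) 1))
    (hWnonneg : ∀ v, 0 ≤ Whom v)
    (hW1 : Whom (-1) = 0) (hW2 : Whom 1 = 0)
    (hWpos : ∀ v ∈ Set.Ioo (-1 : ℝ) 1, 0 < Whom v)
    (hφrange : ∀ x, φ x ∈ Set.Icc (-1 : ℝ) 1)
    (hφ : ∀ x, HasDerivAt φ (Real.sqrt (2 * Whom (φ x))) x)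
    (hφ0 : φ 0 = 0) :
    Monotone φ ∧
    LipschitzWith (Real.toNNReal (⨆ u ∈ Set.Icc (-1 : ℝ) 1, Real.sqrt (2 * Whom u))) φ ∧
    Tendsto φ atTop (nhds 1) ∧ Tendsto φ atBot (nhds (-1)) :=
  stmt7_general Whom φ hWlip hWpos hφrange hφ hφ0
end
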